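/- Let {x_k} be generated by the TRFD algorithm, assume f is bounded below by f_low, and suppose T ≥ 1 satisfies ψ_{p,Δ_*}(x_k) > ε for k = 0,...,T−1 (equivalently, T ≤ T_g(ε), the first index where ψ_{p,Δ_*}(x_k) ≤ ε). Then the number of successful iterations among {0,...,T−1} satisfies |S ∩ {0,...,T−1}| ≤ 8 L_{h,p} max{σ, L_J} c_{p,2}(m) c_{2,p}(n)² (f(x_0) − f_low) / (α(1−α)θ²) · ε^{−2}. -/

import Mathlib

open scoped ENNReal

noncomputable section

/-- The `p`-norm on `ℝ^n`, for `p ∈ [1,∞]`. -/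
def pNorm (p : ℝ≥0∞) {n : ℕ} (x : Fin n → ℝ) : ℝ :=
  if p = ∞ then ⨆ i, |x i| else (∑ i, |x i| ^ p.toReal) ^ (1 / p.toReal)

/-- The Euclidean norm on `ℝ^n`. -/
def eucNorm {n : ℕ} (x : Fin n → ℝ) : ℝ := Real.sqrt (∑ i, x i ^ 2)

/-- The operator norm of a matrix, induced by Euclidean norms. -/
def opNorm2 {m n : ℕ} (A : Matrix (Fin m) (Fin n) ℝ) : ℝ :=
  sSup ((fun v => eucNorm (A.mulVec v)) '' {v | eucNorm v ≤ 1})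

/-- Forward finite-difference approximation of the Jacobian of `F` at `x` with stepsize `τ`:
the `j`-th column is `(F (x + τ e_j) - F x) / τ`. -/
def fdMatrix {n m : ℕ} (F : (Fin n → ℝ) → (Fin m → ℝ)) (x : Fin n → ℝ) (τ : ℝ) :
    Matrix (Fin m) (Fin n) ℝ :=
  Matrix.of fun i j => (F (x + Pi.single j τ) i - F x i) / τ

/-- Stationarity measure `ψ_{p,r}(x)`. -/
def psi {n m : ℕ} (Ω : Set (Fin n → ℝ)) (F : (Fin n → ℝ) → (Fin m → ℝ))
    (h : (Fin m → ℝ) → ℝ) (J : (Fin n → ℝ) → Matrix (Fin m) (Fin n) ℝ)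
    (p : ℝ≥0∞) (r : ℝ) (x : Fin n → ℝ) : ℝ :=
  r⁻¹ * (h (F x) -
    sInf ((fun s => h (F x + (J x).mulVec s)) '' {s | x + s ∈ Ω ∧ pNorm p s ≤ r}))

/-- Approximate stationarity measure `η_{p,r}(x; A)`. -/
def eta {n m : ℕ} (Ω : Set (Fin n → ℝ)) (F : (Fin n → ℝ) → (Fin m → ℝ))
    (h : (Fin m → ℝ) → ℝ) (p : ℝ≥0∞) (r : ℝ) (x : Fin n → ℝ)
    (A : Matrix (Fin m) (Fin n) ℝ) : ℝ :=
  r⁻¹ * (h (F x) -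
    sInf ((fun s => h (F x + A.mulVec s)) '' {s | x + s ∈ Ω ∧ pNorm p s ≤ r}))

/-- The TRFD algorithm: `x`, `τ`, `Δ`, `A`, `d`, `ρ` are the iterates, finite-difference
stepsizes, trust-region radii, finite-difference Jacobian approximations, trial steps and
ratios generated by TRFD with parameters `ε, σ, α, θ, Δstar` from the point `x 0`. -/
def TRFDrun {n m : ℕ} (Ω : Set (Fin n → ℝ)) (F : (Fin n → ℝ) → (Fin m → ℝ))
    (h : (Fin m → ℝ) → ℝ) (p : ℝ≥0∞)
    (Lh cpm cnp ε σ α θ Δstar : ℝ)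
    (x : ℕ → Fin n → ℝ) (τ Δ : ℕ → ℝ) (A : ℕ → Matrix (Fin m) (Fin n) ℝ)
    (d : ℕ → Fin n → ℝ) (ρ : ℕ → ℝ) : Prop :=
  x 0 ∈ Ω ∧
  τ 0 = ε / (Lh * σ * cpm * cnp * Real.sqrt n) ∧
  τ 0 * Real.sqrt n ≤ Δ 0 ∧ Δ 0 ≤ Δstar ∧
  (∀ k, A k = fdMatrix F (x k) (τ k)) ∧
  (∀ k,
    -- unsuccessful iteration of type I
    (eta Ω F h p Δstar (x k) (A k) < ε / 2 ∧
      x (k + 1) = x k ∧ Δ (k + 1) = Δ k ∧ τ (k + 1) = τ k / 2) ∨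
    (ε / 2 ≤ eta Ω F h p Δstar (x k) (A k) ∧
      -- the trial step is feasible and achieves a `θ`-fraction of the optimal model decrease
      pNorm p (d k) ≤ Δ k ∧ x k + d k ∈ Ω ∧
      θ * (h (F (x k)) -
          sInf ((fun s => h (F (x k) + (A k).mulVec s)) ''
            {s | x k + s ∈ Ω ∧ pNorm p s ≤ Δ k})) ≤
        h (F (x k)) - h (F (x k) + (A k).mulVec (d k)) ∧
      ρ k = (h (F (x k)) - h (F (x k + d k))) /
            (h (F (x k)) - h (F (x k) + (A k).mulVec (d k))) ∧
      -- successful iteration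
      ((α ≤ ρ k ∧ x (k + 1) = x k + d k ∧ Δ (k + 1) = min (2 * Δ k) Δstar ∧
          τ (k + 1) = τ k) ∨
      -- unsuccessful iteration of type II
       (ρ k < α ∧ τ k * Real.sqrt n ≤ Δ k / 2 ∧
          x (k + 1) = x k ∧ Δ (k + 1) = Δ k / 2 ∧ τ (k + 1) = τ k) ∨
      -- unsuccessful iteration of type III
       (ρ k < α ∧ Δ k / 2 < τ k * Real.sqrt n ∧
          x (k + 1) = x k ∧ Δ (k + 1) = Δ k / 2 ∧ τ (k + 1) = τ k / 2))))

/-!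
When `η_{p,Δ*}(x_k; A_k) ≥ ε/2`, convexity of `h` and `Ω` makes the predicted decrease at least
`θ ε Δ_k / 2`, while Taylor's theorem and the finite-difference error
`‖A_k - J(x_k)‖ ≤ L_J √n τ_k / 2` bound the gap between the actual and the predicted value by
`L_h c_{p,2} L_J c_{2,p}² Δ_k²`. Hence a step with `τ_k √n ≤ Δ_k` is rejected only when
`Δ_k > 2δ`, `δ = (1-α) θ ε / (4 L_h max{σ, L_J} c_{p,2} c_{2,p}²)`, and the choice of `τ_0` gives
`Δ_0 ≥ δ`; so all radii stay above `δ`. Every successful iteration then decreases `f` by at least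
`α θ ε δ / 2`, and there can be at most `(f(x_0) - f_low) / (α θ ε δ / 2)` of them.
-/

open scoped Matrix Matrix.Norms.L2Operator

section Norms

variable {k m n : ℕ} {p : ℝ≥0∞}

lemma pNorm_zero (hp : p ≠ 0) : pNorm p (0 : Fin k → ℝ) = 0 := by
  unfold pNorm
  split_ifs with htop
  · simp [Real.iSup_const_zero]
  · have hq : 0 < p.toReal := ENNReal.toReal_pos hp htop
    simp [Real.zero_rpow hq.ne', Real.zero_rpow (inv_ne_zero hq.ne')]

lemma pNorm_smul_of_nonneg (hp : p ≠ 0) {c : ℝ} (hc : 0 ≤ c) (v : Fin k → ℝ) :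
    pNorm p (c • v) = c * pNorm p v := by
  unfold pNorm
  simp only [Pi.smul_apply, smul_eq_mul, abs_mul, abs_of_nonneg hc]
  split_ifs with htop
  · exact (Real.mul_iSup_of_nonneg hc _).symm
  · have hq : 0 < p.toReal := ENNReal.toReal_pos hp htop
    simp_rw [Real.mul_rpow hc (abs_nonneg _)]
    rw [← Finset.mul_sum, Real.mul_rpow (by positivity) (by positivity), ← Real.rpow_mul hc,
      mul_one_div_cancel hq.ne', Real.rpow_one]

lemma eucNorm_eq_norm_toLp (v : Fin k → ℝ) : eucNorm v = ‖WithLp.toLp 2 v‖ := by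
  simp [eucNorm, EuclideanSpace.norm_eq]

lemma eucNorm_nonneg (v : Fin k → ℝ) : 0 ≤ eucNorm v := Real.sqrt_nonneg _

lemma eucNorm_smul (c : ℝ) (v : Fin k → ℝ) : eucNorm (c • v) = |c| * eucNorm v := by
  simp only [eucNorm_eq_norm_toLp, WithLp.toLp_smul, norm_smul, Real.norm_eq_abs]

lemma eucNorm_sub_le (u v : Fin k → ℝ) : eucNorm (u - v) ≤ eucNorm u + eucNorm v := by
  simpa only [eucNorm_eq_norm_toLp, WithLp.toLp_sub] using norm_sub_le _ _

lemma opNorm2_eq_l2_opNorm (A : Matrix (Fin m) (Fin n) ℝ) : opNorm2 A = ‖A‖ := by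
  rw [Matrix.l2_opNorm_def, ← ContinuousLinearMap.sSup_unitClosedBall_eq_norm, opNorm2]
  congr 1
  ext r
  constructor
  · rintro ⟨v, hv, rfl⟩
    refine ⟨WithLp.toLp 2 v, by simpa [eucNorm_eq_norm_toLp] using hv, ?_⟩
    simp [eucNorm_eq_norm_toLp]
  · rintro ⟨y, hy, rfl⟩
    refine ⟨y.ofLp, by simpa [eucNorm_eq_norm_toLp] using hy, ?_⟩
    simp [eucNorm_eq_norm_toLp]
    rfl

lemma eucNorm_mulVec_le (A : Matrix (Fin m) (Fin n) ℝ) (v : Fin n → ℝ) :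
    eucNorm (A *ᵥ v) ≤ opNorm2 A * eucNorm v := by
  simpa [opNorm2_eq_l2_opNorm, eucNorm_eq_norm_toLp] using A.l2_opNorm_mulVec (WithLp.toLp 2 v)

lemma sum_abs_le_sqrt_card_mul_eucNorm (v : Fin k → ℝ) : ∑ j, |v j| ≤ √k * eucNorm v := by
  rw [eucNorm, ← Real.sqrt_mul (Nat.cast_nonneg k)]
  refine Real.le_sqrt_of_sq_le ?_
  simpa [sq_abs] using Finset.sum_mul_sq_le_sq_mul_sq Finset.univ (fun _ => (1 : ℝ)) (|v ·|)

lemma eucNorm_mulVec_le_of_col {B : Matrix (Fin m) (Fin n) ℝ} {c : ℝ} (hc : 0 ≤ c)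
    (hcol : ∀ j, eucNorm (B.col j) ≤ c) (v : Fin n → ℝ) :
    eucNorm (B *ᵥ v) ≤ √n * c * eucNorm v := by
  have hsum : B *ᵥ v = ∑ j, v j • B.col j := by
    ext i
    simp [Matrix.mulVec, dotProduct, mul_comm]
  calc eucNorm (B *ᵥ v) ≤ ∑ j, |v j| * eucNorm (B.col j) := by
        simpa [hsum, eucNorm_eq_norm_toLp, norm_smul] using
          norm_sum_le Finset.univ fun j => WithLp.toLp 2 (v j • B.col j)
    _ ≤ ∑ j, |v j| * c := by gcongr with j; exact hcol j
    _ = c * ∑ j, |v j| := by rw [Finset.mul_sum]; simp_rw [mul_comm]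
    _ ≤ c * (√n * eucNorm v) := by gcongr; exact sum_abs_le_sqrt_card_mul_eucNorm v
    _ = √n * c * eucNorm v := by ring

end Norms

section Taylor

variable {m n : ℕ} {F : (Fin n → ℝ) → (Fin m → ℝ)} {J : (Fin n → ℝ) → Matrix (Fin m) (Fin n) ℝ}
  {LJ : ℝ}

theorem eucNorm_taylor_remainder_le
    (hJ : ∀ y, HasFDerivAt F (LinearMap.toContinuousLinearMap (Matrix.mulVecLin (J y))) y)
    (hJLip : ∀ y z, opNorm2 (J y - J z) ≤ LJ * eucNorm (y - z)) (x d : Fin n → ℝ) :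
    eucNorm (F (x + d) - F x - J x *ᵥ d) ≤ LJ / 2 * eucNorm d ^ 2 := by
  let e := (EuclideanSpace.equiv (Fin m) ℝ).symm
  let g : ℝ → EuclideanSpace ℝ (Fin m) := fun t => e (F (x + t • d) - F x - t • J x *ᵥ d)
  have hg : ∀ t, HasDerivAt g (e (J (x + t • d) *ᵥ d - J x *ᵥ d)) t := by
    intro t
    have hline : HasDerivAt (fun t : ℝ => x + t • d) d t := by
      simpa using ((hasDerivAt_id t).smul_const d).const_add x
    have hF := ((hJ (x + t • d)).comp_hasDerivAt t hline).sub_const (F x) |>.sub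
      ((hasDerivAt_id t).smul_const (J x *ᵥ d))
    simp only [LinearMap.coe_toContinuousLinearMap', Matrix.mulVecLin_apply, id, one_smul] at hF
    exact e.hasFDerivAt.comp_hasDerivAt t hF
  have hbound : ∀ t ∈ Set.Ico (0 : ℝ) 1,
      ‖e (J (x + t • d) *ᵥ d - J x *ᵥ d)‖ ≤ LJ * eucNorm d ^ 2 * t := by
    rintro t ⟨ht, -⟩
    rw [← Matrix.sub_mulVec]
    calc ‖e ((J (x + t • d) - J x) *ᵥ d)‖ = eucNorm ((J (x + t • d) - J x) *ᵥ d) :=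
          (eucNorm_eq_norm_toLp _).symm
      _ ≤ opNorm2 (J (x + t • d) - J x) * eucNorm d := eucNorm_mulVec_le _ _
      _ ≤ LJ * eucNorm (t • d) * eucNorm d := by
          gcongr
          · exact eucNorm_nonneg d
          · simpa using hJLip (x + t • d) x
      _ = LJ * eucNorm d ^ 2 * t := by rw [eucNorm_smul, abs_of_nonneg ht]; ring
  have key := image_norm_le_of_norm_deriv_right_le_deriv_boundary
    (fun t _ => (hg t).continuousAt.continuousWithinAt) (fun t _ => (hg t).hasDerivWithinAt)
    (B := fun t => LJ * eucNorm d ^ 2 * (t ^ 2 / 2)) (by simp [g, e])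
    (fun t => by simpa using ((hasDerivAt_pow 2 t).div_const 2).const_mul (LJ * eucNorm d ^ 2))
    hbound (Set.right_mem_Icc.2 zero_le_one)
  simpa [g, e, eucNorm_eq_norm_toLp, mul_comm, mul_assoc, mul_left_comm, div_eq_mul_inv] using key

end Taylor

section FiniteDifference

variable {m n : ℕ} {F : (Fin n → ℝ) → (Fin m → ℝ)} {J : (Fin n → ℝ) → Matrix (Fin m) (Fin n) ℝ}
  {LJ : ℝ}

lemma fdMatrix_sub_col {x : Fin n → ℝ} {τ : ℝ} (hτ : τ ≠ 0) (j : Fin n) :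
    (fdMatrix F x τ - J x).col j = τ⁻¹ • (F (x + Pi.single j τ) - F x - J x *ᵥ Pi.single j τ) := by
  ext i
  simp [fdMatrix]
  field_simp

theorem eucNorm_fdMatrix_sub_mulVec_le
    (hJ : ∀ y, HasFDerivAt F (LinearMap.toContinuousLinearMap (Matrix.mulVecLin (J y))) y)
    (hJLip : ∀ y z, opNorm2 (J y - J z) ≤ LJ * eucNorm (y - z)) (hLJ : 0 ≤ LJ)
    (x : Fin n → ℝ) {τ : ℝ} (hτ : 0 < τ) (v : Fin n → ℝ) :
    eucNorm ((fdMatrix F x τ - J x) *ᵥ v) ≤ √n * (LJ * τ / 2) * eucNorm v := by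
  refine eucNorm_mulVec_le_of_col (by positivity) (fun j => ?_) v
  have hsingle : eucNorm (Pi.single j τ : Fin n → ℝ) = τ := by
    simp [eucNorm_eq_norm_toLp, hτ.le]
  have htaylor := eucNorm_taylor_remainder_le hJ hJLip x (Pi.single j τ)
  rw [hsingle] at htaylor
  rw [fdMatrix_sub_col hτ.ne', eucNorm_smul, abs_inv, abs_of_pos hτ, inv_mul_le_iff₀ hτ]
  linarith

theorem eucNorm_sub_fdModel_le
    (hJ : ∀ y, HasFDerivAt F (LinearMap.toContinuousLinearMap (Matrix.mulVecLin (J y))) y)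
    (hJLip : ∀ y z, opNorm2 (J y - J z) ≤ LJ * eucNorm (y - z)) (hLJ : 0 ≤ LJ)
    (x d : Fin n → ℝ) {τ : ℝ} (hτ : 0 < τ) :
    eucNorm (F (x + d) - (F x + fdMatrix F x τ *ᵥ d)) ≤
      LJ / 2 * eucNorm d ^ 2 + √n * (LJ * τ / 2) * eucNorm d := by
  have hsplit : F (x + d) - (F x + fdMatrix F x τ *ᵥ d) =
      (F (x + d) - F x - J x *ᵥ d) - (fdMatrix F x τ - J x) *ᵥ d := by
    rw [Matrix.sub_mulVec]; abel
  rw [hsplit]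
  exact (eucNorm_sub_le _ _).trans (add_le_add (eucNorm_taylor_remainder_le hJ hJLip x d)
    (eucNorm_fdMatrix_sub_mulVec_le hJ hJLip hLJ x hτ d))

end FiniteDifference

section ModelDecrease

variable {m n : ℕ} {Ω : Set (Fin n → ℝ)} {h : (Fin m → ℝ) → ℝ} {p : ℝ≥0∞}

def trustRegion (Ω : Set (Fin n → ℝ)) (p : ℝ≥0∞) (x : Fin n → ℝ) (r : ℝ) : Set (Fin n → ℝ) :=
  {s | x + s ∈ Ω ∧ pNorm p s ≤ r}

lemma smul_mem_trustRegion (hp : p ≠ 0) (hΩ : Convex ℝ Ω) {x s : Fin n → ℝ} (hx : x ∈ Ω)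
    {t R : ℝ} (hs : s ∈ trustRegion Ω p x R) (ht0 : 0 ≤ t) (ht1 : t ≤ 1) :
    t • s ∈ trustRegion Ω p x (t * R) := by
  refine ⟨?_, ?_⟩
  · convert hΩ hx hs.1 (sub_nonneg.2 ht1) ht0 (by ring) using 1
    ext i; simp; ring
  · rw [pNorm_smul_of_nonneg hp ht0]
    exact mul_le_mul_of_nonneg_left hs.2 ht0

def modelDecrease (Ω : Set (Fin n → ℝ)) (h : (Fin m → ℝ) → ℝ) (p : ℝ≥0∞) (x : Fin n → ℝ)
    (c : Fin m → ℝ) (A : Matrix (Fin m) (Fin n) ℝ) (r : ℝ) : ℝ :=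
  h c - sInf ((fun s => h (c + A *ᵥ s)) '' trustRegion Ω p x r)

lemma eta_eq_modelDecrease {F : (Fin n → ℝ) → (Fin m → ℝ)} (r : ℝ) (x : Fin n → ℝ)
    (A : Matrix (Fin m) (Fin n) ℝ) :
    eta Ω F h p r x A = r⁻¹ * modelDecrease Ω h p x (F x) A r := rfl

lemma bddBelow_model_image {Lh cpm cnp : ℝ} (hLh : 0 ≤ Lh) (hcpm0 : 0 ≤ cpm) (hcnp0 : 0 ≤ cnp)
    (hhLip : ∀ z w, |h z - h w| ≤ Lh * pNorm p (z - w))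
    (hcnp : ∀ v : Fin n → ℝ, eucNorm v ≤ cnp * pNorm p v)
    (hcpm : ∀ z : Fin m → ℝ, pNorm p z ≤ cpm * eucNorm z)
    (x : Fin n → ℝ) (c : Fin m → ℝ) (A : Matrix (Fin m) (Fin n) ℝ) (r : ℝ) :
    BddBelow ((fun s => h (c + A *ᵥ s)) '' trustRegion Ω p x r) := by
  refine ⟨h c - Lh * (cpm * (opNorm2 A * (cnp * r))), ?_⟩
  rintro _ ⟨s, ⟨-, hs⟩, rfl⟩
  have hA : 0 ≤ opNorm2 A := (opNorm2_eq_l2_opNorm A).symm ▸ norm_nonneg A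
  have hstep : pNorm p (A *ᵥ s) ≤ cpm * (opNorm2 A * (cnp * r)) := by
    refine (hcpm _).trans (mul_le_mul_of_nonneg_left ((eucNorm_mulVec_le A s).trans ?_) hcpm0)
    exact mul_le_mul_of_nonneg_left ((hcnp s).trans (mul_le_mul_of_nonneg_left hs hcnp0)) hA
  have hlip := hhLip (c + A *ᵥ s) c
  rw [add_sub_cancel_left] at hlip
  have := (abs_le.1 hlip).1
  nlinarith [mul_le_mul_of_nonneg_left hstep hLh]

theorem div_mul_modelDecrease_le (hp : p ≠ 0) (hΩ : Convex ℝ Ω) (hh : ConvexOn ℝ Set.univ h)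
    {x : Fin n → ℝ} (hx : x ∈ Ω) (c : Fin m → ℝ) (A : Matrix (Fin m) (Fin n) ℝ) {r R : ℝ}
    (hbdd : BddBelow ((fun s => h (c + A *ᵥ s)) '' trustRegion Ω p x r))
    (hr : 0 < r) (hrR : r ≤ R) :
    r / R * modelDecrease Ω h p x c A R ≤ modelDecrease Ω h p x c A r := by
  set t := r / R
  have ht0 : 0 < t := div_pos hr (hr.trans_le hrR)
  have ht1 : t ≤ 1 := div_le_one_of_le₀ hrR (hr.le.trans hrR)
  have hne : ((fun s => h (c + A *ᵥ s)) '' trustRegion Ω p x R).Nonempty :=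
    ⟨_, 0, ⟨by simpa using hx, by simpa [pNorm_zero hp] using hr.le.trans hrR⟩, rfl⟩
  have hscaled : ∀ s ∈ trustRegion Ω p x R,
      sInf ((fun s => h (c + A *ᵥ s)) '' trustRegion Ω p x r) ≤
        (1 - t) * h c + t * h (c + A *ᵥ s) := by
    intro s hs
    have hmem := smul_mem_trustRegion hp hΩ hx hs ht0.le ht1
    rw [div_mul_cancel₀ r (hr.trans_le hrR).ne'] at hmem
    refine (csInf_le hbdd ⟨t • s, hmem, rfl⟩).trans ?_
    have hconv := hh.2 (Set.mem_univ c) (Set.mem_univ (c + A *ᵥ s)) (sub_nonneg.2 ht1) ht0.le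
      (by ring)
    rw [smul_eq_mul, smul_eq_mul] at hconv
    convert hconv using 2
    ext i; simp [Matrix.mulVec_smul]; ring
  have hinf : (sInf ((fun s => h (c + A *ᵥ s)) '' trustRegion Ω p x r) -
      (1 - t) * h c) / t ≤ sInf ((fun s => h (c + A *ᵥ s)) '' trustRegion Ω p x R) :=
    le_csInf hne (by
      rintro _ ⟨s, hs, rfl⟩
      rw [div_le_iff₀ ht0]
      linarith [hscaled s hs])
  rw [div_le_iff₀ ht0] at hinf
  simp only [modelDecrease]
  nlinarith

end ModelDecrease

section TrustRegionStep

variable {m n : ℕ} {Ω : Set (Fin n → ℝ)} {F : (Fin n → ℝ) → (Fin m → ℝ)}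
  {J : (Fin n → ℝ) → Matrix (Fin m) (Fin n) ℝ} {h : (Fin m → ℝ) → ℝ} {p : ℝ≥0∞}
  {LJ Lh cpm cnp : ℝ}

theorem mul_le_modelDecrease_of_le_eta (hp : p ≠ 0) (hΩ : Convex ℝ Ω)
    (hh : ConvexOn ℝ Set.univ h) {x : Fin n → ℝ} (hx : x ∈ Ω) {A : Matrix (Fin m) (Fin n) ℝ}
    {ε r R : ℝ} (hbdd : BddBelow ((fun s => h (F x + A *ᵥ s)) '' trustRegion Ω p x r))
    (hr : 0 < r) (hrR : r ≤ R) (hη : ε ≤ eta Ω F h p R x A) :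
    ε * r ≤ modelDecrease Ω h p x (F x) A r := by
  have hR : 0 < R := hr.trans_le hrR
  rw [eta_eq_modelDecrease, inv_mul_eq_div, le_div_iff₀ hR] at hη
  calc ε * r = r / R * (ε * R) := by field_simp
    _ ≤ r / R * modelDecrease Ω h p x (F x) A R := by gcongr
    _ ≤ modelDecrease Ω h p x (F x) A r := div_mul_modelDecrease_le hp hΩ hh hx _ A hbdd hr hrR

theorem actual_sub_model_le
    (hJ : ∀ y, HasFDerivAt F (LinearMap.toContinuousLinearMap (Matrix.mulVecLin (J y))) y)
    (hJLip : ∀ y z, opNorm2 (J y - J z) ≤ LJ * eucNorm (y - z)) (hLJ : 0 ≤ LJ)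
    (hLh : 0 ≤ Lh) (hhLip : ∀ z w, |h z - h w| ≤ Lh * pNorm p (z - w))
    (hcnp1 : 1 ≤ cnp) (hcpm0 : 0 ≤ cpm)
    (hcnp : ∀ v : Fin n → ℝ, eucNorm v ≤ cnp * pNorm p v)
    (hcpm : ∀ z : Fin m → ℝ, pNorm p z ≤ cpm * eucNorm z)
    {x d : Fin n → ℝ} {τ Δ : ℝ} (hτ : 0 < τ) (hτΔ : τ * √n ≤ Δ) (hd : pNorm p d ≤ Δ) :
    h (F (x + d)) - h (F x + fdMatrix F x τ *ᵥ d) ≤ Lh * cpm * LJ * cnp ^ 2 * Δ ^ 2 := by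
  have hΔ : 0 ≤ Δ := (by positivity : 0 ≤ τ * √n).trans hτΔ
  have hd2 : eucNorm d ≤ cnp * Δ := (hcnp d).trans (by gcongr)
  have herr : eucNorm (F (x + d) - (F x + fdMatrix F x τ *ᵥ d)) ≤ LJ * cnp ^ 2 * Δ ^ 2 := by
    refine (eucNorm_sub_fdModel_le hJ hJLip hLJ x d hτ).trans ?_
    have hsq : eucNorm d ^ 2 ≤ cnp ^ 2 * Δ ^ 2 := by
      rw [← mul_pow]; exact pow_le_pow_left₀ (eucNorm_nonneg d) hd2 2
    have hlin : √n * τ * eucNorm d ≤ cnp ^ 2 * Δ ^ 2 := by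
      calc √n * τ * eucNorm d ≤ Δ * (cnp * Δ) := by
            rw [mul_comm √n]; gcongr; exact eucNorm_nonneg d
        _ ≤ cnp ^ 2 * Δ ^ 2 := by nlinarith
    nlinarith
  calc h (F (x + d)) - h (F x + fdMatrix F x τ *ᵥ d)
      ≤ Lh * pNorm p (F (x + d) - (F x + fdMatrix F x τ *ᵥ d)) := (le_abs_self _).trans (hhLip _ _)
    _ ≤ Lh * (cpm * (LJ * cnp ^ 2 * Δ ^ 2)) := by gcongr; exact (hcpm _).trans (by gcongr)
    _ = Lh * cpm * LJ * cnp ^ 2 * Δ ^ 2 := by ring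

end TrustRegionStep

theorem ncard_mul_le_of_decrease {u : ℕ → ℝ} {P : ℕ → Prop} {c lo : ℝ} (hc : 0 ≤ c)
    (hstep : ∀ k, u (k + 1) = u k ∨ P k) (hdec : ∀ k, P k → c ≤ u k - u (k + 1))
    (hlo : ∀ k, lo ≤ u k) (T : ℕ) :
    ({k | k < T ∧ P k}.ncard : ℝ) * c ≤ u 0 - lo := by
  classical
  have hmono : ∀ k, u (k + 1) ≤ u k := fun k =>
    (hstep k).elim le_of_eq fun hk => by linarith [hdec k hk]
  have hset : {k | k < T ∧ P k} = ↑((Finset.range T).filter P) := by ext; simp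
  rw [hset, Set.ncard_coe_finset, ← nsmul_eq_mul]
  calc ((Finset.range T).filter P).card • c ≤ ∑ k ∈ (Finset.range T).filter P, (u k - u (k + 1)) :=
        Finset.card_nsmul_le_sum _ _ _ fun k hk => hdec k (Finset.mem_filter.1 hk).2
    _ ≤ ∑ k ∈ Finset.range T, (u k - u (k + 1)) :=
        Finset.sum_le_sum_of_subset_of_nonneg (Finset.filter_subset _ _)
          fun k _ _ => sub_nonneg.2 (hmono k)
    _ = u 0 - u T := Finset.sum_range_sub' u T
    _ ≤ u 0 - lo := by linarith [hlo T]

namespace TRFDrun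

variable {m n : ℕ} {Ω : Set (Fin n → ℝ)} {F : (Fin n → ℝ) → (Fin m → ℝ)}
  {J : (Fin n → ℝ) → Matrix (Fin m) (Fin n) ℝ} {h : (Fin m → ℝ) → ℝ} {p : ℝ≥0∞}
  {LJ Lh cpm cnp ε σ α θ Δstar : ℝ} {x : ℕ → Fin n → ℝ} {τ Δ : ℕ → ℝ}
  {A : ℕ → Matrix (Fin m) (Fin n) ℝ} {d : ℕ → Fin n → ℝ} {ρ : ℕ → ℝ}

theorem tau_pos (hrun : TRFDrun Ω F h p Lh cpm cnp ε σ α θ Δstar x τ Δ A d ρ) (hn : 1 ≤ n)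
    (hε : 0 < ε) (hLh : 0 < Lh) (hσ : 0 < σ) (hcpm : 0 < cpm) (hcnp : 0 < cnp) (k : ℕ) :
    0 < τ k := by
  induction k with
  | zero =>
    have : (0 : ℝ) < n := by exact_mod_cast hn
    rw [hrun.2.1]; positivity
  | succ k ih =>
    rcases hrun.2.2.2.2.2 k with ⟨-, -, -, hτ⟩ | ⟨-, -, -, -, -, ⟨-, -, -, hτ⟩ |
      ⟨-, -, -, -, hτ⟩ | ⟨-, -, -, -, hτ⟩⟩ <;> rw [hτ] <;> positivity

theorem x_succ_eq_or_successful (hrun : TRFDrun Ω F h p Lh cpm cnp ε σ α θ Δstar x τ Δ A d ρ)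
    (k : ℕ) : x (k + 1) = x k ∨ (ε / 2 ≤ eta Ω F h p Δstar (x k) (A k) ∧ α ≤ ρ k) := by
  rcases hrun.2.2.2.2.2 k with ⟨-, hx, -⟩ | ⟨hη, -, -, -, -, ⟨hρ, -⟩ | ⟨-, -, hx, -⟩ |
    ⟨-, -, hx, -⟩⟩
  exacts [.inl hx, .inr ⟨hη, hρ⟩, .inl hx, .inl hx]

theorem mul_le_predicted_decrease
    (hrun : TRFDrun Ω F h p Lh cpm cnp ε σ α θ Δstar x τ Δ A d ρ)
    (hp : p ≠ 0) (hΩ : Convex ℝ Ω) (hh : ConvexOn ℝ Set.univ h) (hLh : 0 ≤ Lh)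
    (hhLip : ∀ z w, |h z - h w| ≤ Lh * pNorm p (z - w)) (hcnp0 : 0 ≤ cnp) (hcpm0 : 0 ≤ cpm)
    (hcnp : ∀ v : Fin n → ℝ, eucNorm v ≤ cnp * pNorm p v)
    (hcpm : ∀ z : Fin m → ℝ, pNorm p z ≤ cpm * eucNorm z) (hθ : 0 ≤ θ)
    {k : ℕ} (hx : x k ∈ Ω) (hΔ0 : 0 < Δ k) (hΔ : Δ k ≤ Δstar)
    (hη : ε / 2 ≤ eta Ω F h p Δstar (x k) (A k)) :
    θ * (ε / 2 * Δ k) ≤ h (F (x k)) - h (F (x k) + A k *ᵥ d k) := by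
  rcases hrun.2.2.2.2.2 k with ⟨hη', -⟩ | ⟨-, -, -, hθd, -⟩
  · linarith
  have hmodel := mul_le_modelDecrease_of_le_eta hp hΩ hh hx
    (bddBelow_model_image hLh hcpm0 hcnp0 hhLip hcnp hcpm _ _ _ _) hΔ0 hΔ hη
  exact (mul_le_mul_of_nonneg_left hmodel hθ).trans hθd

theorem lt_radius_of_ratio_lt (hrun : TRFDrun Ω F h p Lh cpm cnp ε σ α θ Δstar x τ Δ A d ρ)
    (hp : p ≠ 0) (hΩ : Convex ℝ Ω)
    (hJ : ∀ y, HasFDerivAt F (LinearMap.toContinuousLinearMap (Matrix.mulVecLin (J y))) y)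
    (hJLip : ∀ y z, opNorm2 (J y - J z) ≤ LJ * eucNorm (y - z)) (hLJ : 0 ≤ LJ)
    (hh : ConvexOn ℝ Set.univ h) (hLh : 0 ≤ Lh)
    (hhLip : ∀ z w, |h z - h w| ≤ Lh * pNorm p (z - w))
    (hcnp1 : 1 ≤ cnp) (hcpm0 : 0 ≤ cpm)
    (hcnp : ∀ v : Fin n → ℝ, eucNorm v ≤ cnp * pNorm p v)
    (hcpm : ∀ z : Fin m → ℝ, pNorm p z ≤ cpm * eucNorm z)
    (hn : 1 ≤ n) (hε : 0 < ε) (hθ : 0 < θ) (hα : α ≤ 1) {k : ℕ} (hτ : 0 < τ k) (hx : x k ∈ Ω)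
    (hτΔ : τ k * √n ≤ Δ k) (hΔ : Δ k ≤ Δstar) (hη : ε / 2 ≤ eta Ω F h p Δstar (x k) (A k))
    (hρ : ρ k < α) :
    (1 - α) * θ * (ε / 2) < Lh * cpm * LJ * cnp ^ 2 * Δ k := by
  have hΔ0 : 0 < Δ k := by
    have : (0 : ℝ) < n := by exact_mod_cast hn
    exact (by positivity : 0 < τ k * √n).trans_le hτΔ
  have hpred := hrun.mul_le_predicted_decrease hp hΩ hh hLh hhLip (by linarith) hcpm0 hcnp hcpm
    hθ.le hx hΔ0 hΔ hη
  obtain ⟨-, -, -, -, hA, hstep⟩ := hrun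
  rcases hstep k with ⟨hη', -⟩ | ⟨-, hd, -, -, hρk, -⟩
  · linarith
  have hpred0 : 0 < h (F (x k)) - h (F (x k) + A k *ᵥ d k) :=
    (by positivity : 0 < θ * (ε / 2 * Δ k)).trans_le hpred
  rw [hρk, div_lt_iff₀ hpred0] at hρ
  have herr := actual_sub_model_le (x := x k) hJ hJLip hLJ hLh hhLip hcnp1 hcpm0 hcnp hcpm hτ hτΔ hd
  rw [← hA k] at herr
  have : (1 - α) * θ * (ε / 2) * Δ k < Lh * cpm * LJ * cnp ^ 2 * Δ k * Δ k := by
    nlinarith [mul_le_mul_of_nonneg_left hpred (sub_nonneg.2 hα)]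
  exact lt_of_mul_lt_mul_right this hΔ0.le

theorem radius_invariant (hrun : TRFDrun Ω F h p Lh cpm cnp ε σ α θ Δstar x τ Δ A d ρ)
    (hτ : ∀ k, 0 ≤ τ k) {δ : ℝ} (hδ : δ ≤ Δ 0)
    (hrej : ∀ k, x k ∈ Ω → τ k * √n ≤ Δ k → Δ k ≤ Δstar →
      ε / 2 ≤ eta Ω F h p Δstar (x k) (A k) → ρ k < α → 2 * δ < Δ k) (k : ℕ) :
    x k ∈ Ω ∧ τ k * √n ≤ Δ k ∧ Δ k ≤ Δstar ∧ δ ≤ Δ k := by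
  induction k with
  | zero => exact ⟨hrun.1, hrun.2.2.1, hrun.2.2.2.1, hδ⟩
  | succ k ih =>
    obtain ⟨hx, hτΔ, hΔ, hδk⟩ := ih
    have hτn : 0 ≤ τ k * √n := mul_nonneg (hτ k) (Real.sqrt_nonneg n)
    rcases hrun.2.2.2.2.2 k with ⟨-, hx', hΔ', hτ'⟩ | ⟨hη, -, hxd, -, -, ⟨-, hx', hΔ', hτ'⟩ |
      ⟨hρ, hτΔ', hx', hΔ', hτ'⟩ | ⟨hρ, -, hx', hΔ', hτ'⟩⟩
    · rw [hx', hΔ', hτ']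
      exact ⟨hx, by linarith, hΔ, hδk⟩
    · rw [hx', hΔ', hτ']
      have : Δ k ≤ min (2 * Δ k) Δstar := le_min (by linarith) hΔ
      exact ⟨hxd, by linarith, min_le_right _ _, by linarith⟩
    · have := hrej k hx hτΔ hΔ hη hρ
      rw [hx', hΔ', hτ']
      exact ⟨hx, hτΔ', by linarith, by linarith⟩
    · have := hrej k hx hτΔ hΔ hη hρ
      rw [hx', hΔ', hτ']
      exact ⟨hx, by linarith, by linarith, by linarith⟩

theorem le_sub_of_successful (hrun : TRFDrun Ω F h p Lh cpm cnp ε σ α θ Δstar x τ Δ A d ρ)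
    (hp : p ≠ 0) (hΩ : Convex ℝ Ω) (hh : ConvexOn ℝ Set.univ h) (hLh : 0 ≤ Lh)
    (hhLip : ∀ z w, |h z - h w| ≤ Lh * pNorm p (z - w)) (hcnp0 : 0 ≤ cnp) (hcpm0 : 0 ≤ cpm)
    (hcnp : ∀ v : Fin n → ℝ, eucNorm v ≤ cnp * pNorm p v)
    (hcpm : ∀ z : Fin m → ℝ, pNorm p z ≤ cpm * eucNorm z) (hε : 0 < ε) (hθ : 0 < θ)
    (hα : 0 ≤ α) {k : ℕ} (hx : x k ∈ Ω) (hΔ0 : 0 < Δ k) (hΔ : Δ k ≤ Δstar)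
    (hη : ε / 2 ≤ eta Ω F h p Δstar (x k) (A k)) (hρ : α ≤ ρ k) :
    α * (θ * (ε / 2 * Δ k)) ≤ h (F (x k)) - h (F (x (k + 1))) := by
  have hpred := hrun.mul_le_predicted_decrease hp hΩ hh hLh hhLip hcnp0 hcpm0 hcnp hcpm
    hθ.le hx hΔ0 hΔ hη
  have hpred0 : 0 < h (F (x k)) - h (F (x k) + A k *ᵥ d k) :=
    (by positivity : 0 < θ * (ε / 2 * Δ k)).trans_le hpred
  rcases hrun.2.2.2.2.2 k with ⟨hη', -⟩ | ⟨-, -, -, -, hρk, ⟨-, hx', -⟩ | ⟨hρ', -⟩ | ⟨hρ', -⟩⟩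
  · linarith
  · rw [hρk, le_div_iff₀ hpred0] at hρ
    rw [hx']
    nlinarith
  · linarith
  · linarith

theorem radius_lower_bound (hrun : TRFDrun Ω F h p Lh cpm cnp ε σ α θ Δstar x τ Δ A d ρ)
    (hp : p ≠ 0) (hΩ : Convex ℝ Ω)
    (hJ : ∀ y, HasFDerivAt F (LinearMap.toContinuousLinearMap (Matrix.mulVecLin (J y))) y)
    (hJLip : ∀ y z, opNorm2 (J y - J z) ≤ LJ * eucNorm (y - z)) (hLJ : 0 ≤ LJ)
    (hh : ConvexOn ℝ Set.univ h) (hLh : 0 < Lh)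
    (hhLip : ∀ z w, |h z - h w| ≤ Lh * pNorm p (z - w))
    (hcnp1 : 1 ≤ cnp) (hcpm1 : 1 ≤ cpm)
    (hcnp : ∀ v : Fin n → ℝ, eucNorm v ≤ cnp * pNorm p v)
    (hcpm : ∀ z : Fin m → ℝ, pNorm p z ≤ cpm * eucNorm z)
    (hn : 1 ≤ n) (hε : 0 < ε) (hσ : 0 < σ) (hα0 : 0 ≤ α) (hα : α < 1) (hθ0 : 0 < θ)
    (hθ1 : θ ≤ 1) (k : ℕ) :
    x k ∈ Ω ∧ τ k * √n ≤ Δ k ∧ Δ k ≤ Δstar ∧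
      (1 - α) * θ * ε / (4 * Lh * max σ LJ * cpm * cnp ^ 2) ≤ Δ k := by
  have hτ := hrun.tau_pos hn hε hLh hσ (by linarith) (by linarith)
  have hM : 0 < max σ LJ := hσ.trans_le (le_max_left σ LJ)
  refine hrun.radius_invariant (fun k => (hτ k).le) ?_ (fun k hx hτΔ hΔ hη hρ => ?_) k
  · have hτ0 : τ 0 * √n = ε / (Lh * σ * cpm * cnp) := by
      have : (0 : ℝ) < n := by exact_mod_cast hn
      rw [hrun.2.1]; field_simp
    refine le_trans (div_le_div₀ hε.le ?_ (by positivity) ?_) (hτ0 ▸ hrun.2.2.1)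
    · nlinarith [mul_le_one₀ (by linarith : 1 - α ≤ 1) hθ0.le hθ1]
    · have : σ * cnp ≤ 4 * max σ LJ * cnp ^ 2 := by
        nlinarith [le_max_left σ LJ, mul_le_mul_of_nonneg_left hcnp1 (by linarith : 0 ≤ cnp)]
      calc Lh * σ * cpm * cnp = Lh * cpm * (σ * cnp) := by ring
        _ ≤ Lh * cpm * (4 * max σ LJ * cnp ^ 2) := by gcongr
        _ = 4 * Lh * max σ LJ * cpm * cnp ^ 2 := by ring
  · have hrej := hrun.lt_radius_of_ratio_lt hp hΩ hJ hJLip hLJ hh hLh.le hhLip hcnp1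
      (by linarith) hcnp hcpm hn hε hθ0 hα.le (hτ k) hx hτΔ hΔ hη hρ
    have hΔ0 : 0 ≤ Δ k := (mul_nonneg (hτ k).le (Real.sqrt_nonneg n)).trans hτΔ
    have : Lh * cpm * LJ * cnp ^ 2 * Δ k ≤ Lh * max σ LJ * cpm * cnp ^ 2 * Δ k := by
      rw [mul_right_comm Lh cpm]; gcongr; exact le_max_right σ LJ
    rw [show 2 * ((1 - α) * θ * ε / (4 * Lh * max σ LJ * cpm * cnp ^ 2)) =
      (1 - α) * θ * (ε / 2) / (Lh * max σ LJ * cpm * cnp ^ 2) by ring,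
      div_lt_iff₀ (by positivity)]
    linarith

end TRFDrun

theorem stmt10_general
    {n m : ℕ} (hn : 1 ≤ n) (p : ℝ≥0∞) (hp : 1 ≤ p)
    (Ω : Set (Fin n → ℝ)) (hΩcv : Convex ℝ Ω)
    (F : (Fin n → ℝ) → (Fin m → ℝ)) (J : (Fin n → ℝ) → Matrix (Fin m) (Fin n) ℝ)
    (hJ : ∀ y, HasFDerivAt F (LinearMap.toContinuousLinearMap (Matrix.mulVecLin (J y))) y)
    (LJ : ℝ) (hLJ : 0 < LJ)
    (hJLip : ∀ y z, opNorm2 (J y - J z) ≤ LJ * eucNorm (y - z))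
    (h : (Fin m → ℝ) → ℝ) (hconv : ConvexOn ℝ Set.univ h)
    (Lh : ℝ) (hLh : 0 < Lh)
    (hhLip : ∀ z w, |h z - h w| ≤ Lh * pNorm p (z - w))
    (cnp cpm : ℝ) (hcnp1 : 1 ≤ cnp) (hcpm1 : 1 ≤ cpm)
    (hcnp : ∀ v : Fin n → ℝ, eucNorm v ≤ cnp * pNorm p v)
    (hcpm : ∀ z : Fin m → ℝ, pNorm p z ≤ cpm * eucNorm z)
    (ε σ α θ Δstar : ℝ) (hε : 0 < ε) (hσ : 0 < σ)
    (hα0 : 0 < α) (hα1 : α < 1) (hθ0 : 0 < θ) (hθ1 : θ ≤ 1)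
    (x : ℕ → Fin n → ℝ) (τ Δ : ℕ → ℝ) (A : ℕ → Matrix (Fin m) (Fin n) ℝ)
    (d : ℕ → Fin n → ℝ) (ρ : ℕ → ℝ)
    (hrun : TRFDrun Ω F h p Lh cpm cnp ε σ α θ Δstar x τ Δ A d ρ)
    (flow : ℝ) (hflow : ∀ y, flow ≤ h (F y))
    (T : ℕ) :
    (Set.ncard {k : ℕ | k < T ∧ ε / 2 ≤ eta Ω F h p Δstar (x k) (A k) ∧ α ≤ ρ k} : ℝ) ≤
      8 * Lh * max σ LJ * cpm * cnp ^ 2 * (h (F (x 0)) - flow) /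
        (α * (1 - α) * θ ^ 2) / ε ^ 2 := by
  have hp0 : p ≠ 0 := (zero_lt_one.trans_le hp).ne'
  set δ := (1 - α) * θ * ε / (4 * Lh * max σ LJ * cpm * cnp ^ 2) with hδ
  have hδ0 : 0 < δ := by
    have := sub_pos.2 hα1; have := hσ.trans_le (le_max_left σ LJ); positivity
  have hradius := hrun.radius_lower_bound hp0 hΩcv hJ hJLip hLJ.le hconv hLh hhLip hcnp1 hcpm1
    hcnp hcpm hn hε hσ hα0.le hα1 hθ0 hθ1
  have hdec : ∀ k, ε / 2 ≤ eta Ω F h p Δstar (x k) (A k) ∧ α ≤ ρ k →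
      α * (θ * (ε / 2 * δ)) ≤ h (F (x k)) - h (F (x (k + 1))) := fun k ⟨hη, hρ⟩ => by
    obtain ⟨hx, -, hΔ, hδk⟩ := hradius k
    refine le_trans ?_ (hrun.le_sub_of_successful hp0 hΩcv hconv hLh.le hhLip (by linarith)
      (by linarith) hcnp hcpm hε hθ0 hα0.le hx (hδ0.trans_le hδk) hΔ hη hρ)
    gcongr
  have hcount := ncard_mul_le_of_decrease (by positivity)
    (fun k => (hrun.x_succ_eq_or_successful k).imp_left (congrArg (h ∘ F))) hdec
    (fun k => hflow (x k)) T
  rw [show α * (θ * (ε / 2 * δ)) = α * (1 - α) * θ ^ 2 * ε ^ 2 /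
      (8 * Lh * max σ LJ * cpm * cnp ^ 2) by rw [hδ]; field_simp; ring, mul_div_assoc',
    div_le_iff₀ (by positivity)] at hcount
  rw [div_div, le_div_iff₀ (by have := sub_pos.2 hα1; positivity)]
  linarith

/-- Lemma 3.4: bound on the number of successful iterations. -/
theorem stmt10
    {n m : ℕ} (hn : 1 ≤ n) (hm : 1 ≤ m) (p : ℝ≥0∞) (hp : 1 ≤ p)
    (Ω : Set (Fin n → ℝ)) (hΩne : Ω.Nonempty) (hΩcl : IsClosed Ω) (hΩcv : Convex ℝ Ω)
    (F : (Fin n → ℝ) → (Fin m → ℝ)) (J : (Fin n → ℝ) → Matrix (Fin m) (Fin n) ℝ)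
    (hJ : ∀ y, HasFDerivAt F (LinearMap.toContinuousLinearMap (Matrix.mulVecLin (J y))) y)
    (LJ : ℝ) (hLJ : 0 < LJ)
    (hJLip : ∀ y z, opNorm2 (J y - J z) ≤ LJ * eucNorm (y - z))
    (h : (Fin m → ℝ) → ℝ) (hconv : ConvexOn ℝ Set.univ h)
    (Lh : ℝ) (hLh : 0 < Lh)
    (hhLip : ∀ z w, |h z - h w| ≤ Lh * pNorm p (z - w))
    (cnp cpm : ℝ) (hcnp1 : 1 ≤ cnp) (hcpm1 : 1 ≤ cpm)
    (hcnp : ∀ v : Fin n → ℝ, eucNorm v ≤ cnp * pNorm p v)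
    (hcpm : ∀ z : Fin m → ℝ, pNorm p z ≤ cpm * eucNorm z)
    (ε σ α θ Δstar : ℝ) (hε : 0 < ε) (hσ : 0 < σ)
    (hα0 : 0 < α) (hα1 : α < 1) (hθ0 : 0 < θ) (hθ1 : θ ≤ 1)
    (x : ℕ → Fin n → ℝ) (τ Δ : ℕ → ℝ) (A : ℕ → Matrix (Fin m) (Fin n) ℝ)
    (d : ℕ → Fin n → ℝ) (ρ : ℕ → ℝ)
    (hrun : TRFDrun Ω F h p Lh cpm cnp ε σ α θ Δstar x τ Δ A d ρ)
    (flow : ℝ) (hflow : ∀ y, flow ≤ h (F y))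
    (T : ℕ) (hT1 : 1 ≤ T) (hT : ∀ k < T, ε < psi Ω F h J p Δstar (x k)) :
    (Set.ncard {k : ℕ | k < T ∧ ε / 2 ≤ eta Ω F h p Δstar (x k) (A k) ∧ α ≤ ρ k} : ℝ) ≤
      8 * Lh * max σ LJ * cpm * cnp ^ 2 * (h (F (x 0)) - flow) /
        (α * (1 - α) * θ ^ 2) / ε ^ 2 :=
  stmt10_general hn p hp Ω hΩcv F J hJ LJ hLJ hJLip h hconv Lh hLh hhLip cnp cpm hcnp1 hcpm1 hcnp
    hcpm ε σ α θ Δstar hε hσ hα0 hα1 hθ0 hθ1 x τ Δ A d ρ hrun flow hflow T
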